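/- arXiv:2007.15623 — 2 statements merged into one kernel-verified Lean document; each statement's English description precedes it below -/
import Mathlib

section
/- Let K ⊆ ℝ^d be compact and let ℓ, L ≥ 1. Every f ∈ W^L(K) belongs to W^{ℓ+L}(K), and ‖f‖_{W^{ℓ+L}(K)} ≤ 2 ‖f‖_{W^L(K)}. -/
open MeasureTheory Set Filter Topology
open scoped ENNReal NNReal Classical

noncomputable section

/-- The rectified linear unit. -/
def relu (z : ℝ) : ℝ := max z 0

/-- The Borel σ-algebra on `C(K, ℝ)` for the topology of uniform convergence
(= compact-open topology for compact `K`). -/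
instance ctsMeasurableSpace {d : ℕ} (K : Set (Fin d → ℝ)) : MeasurableSpace C(K, ℝ) := borel _

/-- `(μp, μn)` is a (Jordan-decomposed) signed-measure representation of `f` over the
class `H ⊆ C(K, ℝ)`: both parts are finite measures concentrated on `H`, and
`f x = ∫ relu (g x) dμp - ∫ relu (g x) dμn` for every `x ∈ K`. -/
def IsBarronRep {d : ℕ} (K : Set (Fin d → ℝ)) (H : Set C(K, ℝ)) (f : C(K, ℝ))
    (μp μn : Measure C(K, ℝ)) : Prop :=
  IsFiniteMeasure μp ∧ IsFiniteMeasure μn ∧ μp Hᶜ = 0 ∧ μn Hᶜ = 0 ∧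
    ∀ x : K, f x = (∫ g : C(K, ℝ), relu (g x) ∂μp) - ∫ g : C(K, ℝ), relu (g x) ∂μn

/-- The generalized Barron norm `‖f‖_{X,K}`, where `H` plays the role of the closed unit
ball `B^X` (realized inside `C(K,ℝ)`): the infimum of the total variation mass over all
signed-measure representations of `f`. -/
def barronNorm {d : ℕ} (K : Set (Fin d → ℝ)) (H : Set C(K, ℝ)) (f : C(K, ℝ)) : ℝ≥0∞ :=
  ⨅ p : {p : Measure C(K, ℝ) × Measure C(K, ℝ) // IsBarronRep K H f p.1 p.2},
    p.1.1 Set.univ + p.1.2 Set.univ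

/-- The neural tree norm `‖·‖_{W^L(K)}`. For `L = 0` it is the norm `‖w‖_{ℓ¹} + |b|` of the
space of affine functions `x ↦ wᵀx + b`; for `L ≥ 1`, `W^L(K) = B_{W^{L-1}(K), K}` is the
generalized Barron space modelled on `X = W^{L-1}(K)`, whose unit ball is
`{g : treeNorm K (L-1) g ≤ 1}`.  A continuous function `f` belongs to `W^L(K)` iff
`treeNorm K L f ≠ ∞`. -/
def treeNorm {d : ℕ} (K : Set (Fin d → ℝ)) : ℕ → C(K, ℝ) → ℝ≥0∞
  | 0, f =>
    ⨅ p : {p : (Fin d → ℝ) × ℝ //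
        ∀ x : K, f x = (∑ i : Fin d, p.1 i * (x : Fin d → ℝ) i) + p.2},
      ENNReal.ofReal ((∑ i : Fin d, |p.1.1 i|) + |p.1.2|)
  | (L + 1), f => barronNorm K {g : C(K, ℝ) | treeNorm K L g ≤ 1} f

end

/-! For `L ≥ 1` the unit ball of `W^L(K)` is symmetric, and `g = relu ∘ g - relu ∘ (-g)`, so a
function `g` in that ball is represented over the same ball by two Dirac masses. Since
`relu ∘ relu = relu` and `relu ∘ h` lies in the unit ball of `W^{k+1}(K)` whenever `h` lies in
that of `W^k(K)`, both features can be lifted to any greater depth, which gives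
`‖g‖_{W^{ℓ+L}(K)} ≤ 2`. Apply this to `g = f / r` and let `r` decrease to `‖f‖_{W^L(K)}`. -/

section

variable {d : ℕ} {K : Set (Fin d → ℝ)}

lemma relu_relu (t : ℝ) : relu (relu t) = relu t :=
  max_eq_left (le_max_right _ _)

lemma relu_sub_relu_neg (t : ℝ) : relu t - relu (-t) = t :=
  max_zero_sub_max_neg_zero_eq_self t

lemma continuous_relu : Continuous relu :=
  continuous_id.max continuous_const

instance : BorelSpace C(K, ℝ) := ⟨rfl⟩

lemma stronglyMeasurable_relu_eval (x : K) :
    StronglyMeasurable fun g : C(K, ℝ) => relu (g x) :=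
  (continuous_relu.comp (continuous_eval_const x)).stronglyMeasurable

def reluComp (g : C(K, ℝ)) : C(K, ℝ) :=
  (⟨relu, continuous_relu⟩ : C(ℝ, ℝ)).comp g

@[simp]
lemma reluComp_apply (g : C(K, ℝ)) (x : K) : reluComp g x = relu (g x) := rfl

section BarronRep

variable {H : Set C(K, ℝ)} {f : C(K, ℝ)} {μp μn : Measure C(K, ℝ)}

lemma barronNorm_le_of_isBarronRep (h : IsBarronRep K H f μp μn) :
    barronNorm K H f ≤ μp univ + μn univ :=
  iInf_le_of_le ⟨(μp, μn), h⟩ le_rfl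

lemma exists_isBarronRep_of_barronNorm_lt {r : ℝ≥0∞} (h : barronNorm K H f < r) :
    ∃ μp μn, IsBarronRep K H f μp μn ∧ μp univ + μn univ < r := by
  obtain ⟨⟨⟨μp, μn⟩, hrep⟩, hlt⟩ := iInf_lt_iff.1 h
  exact ⟨μp, μn, hrep, hlt⟩

lemma IsBarronRep.neg (h : IsBarronRep K H f μp μn) : IsBarronRep K H (-f) μn μp := by
  obtain ⟨hp, hn, hpH, hnH, hf⟩ := h
  exact ⟨hn, hp, hnH, hpH, fun x => by simp only [ContinuousMap.neg_apply, hf x, neg_sub]⟩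

lemma IsBarronRep.smul (h : IsBarronRep K H f μp μn) (c : ℝ≥0) :
    IsBarronRep K H ((c : ℝ) • f) (c • μp) (c • μn) := by
  obtain ⟨hp, hn, hpH, hnH, hf⟩ := h
  refine ⟨inferInstance, inferInstance, by simp [hpH], by simp [hnH], fun x => ?_⟩
  simp only [ContinuousMap.smul_apply, hf x, integral_smul_nnreal_measure, smul_eq_mul,
    NNReal.smul_def, mul_sub]

lemma isBarronRep_dirac_sub_dirac {gp gn : C(K, ℝ)} (hp : gp ∈ H) (hn : gn ∈ H)
    (hf : ∀ x, f x = relu (gp x) - relu (gn x)) :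
    IsBarronRep K H f (Measure.dirac gp) (Measure.dirac gn) := by
  refine ⟨inferInstance, inferInstance, by simp [hp], by simp [hn], fun x => ?_⟩
  rw [integral_dirac' _ _ (stronglyMeasurable_relu_eval x),
    integral_dirac' _ _ (stronglyMeasurable_relu_eval x), hf x]

lemma isBarronRep_reluComp {g : C(K, ℝ)} (hg : g ∈ H) :
    IsBarronRep K H (reluComp g) (Measure.dirac g) 0 := by
  refine ⟨inferInstance, inferInstance, by simp [hg], by simp, fun x => ?_⟩
  rw [integral_dirac' _ _ (stronglyMeasurable_relu_eval x)]
  simp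

end BarronRep

lemma treeNorm_succ_reluComp_le_one {L : ℕ} {g : C(K, ℝ)} (hg : treeNorm K L g ≤ 1) :
    treeNorm K (L + 1) (reluComp g) ≤ 1 :=
  (barronNorm_le_of_isBarronRep (isBarronRep_reluComp (H := {h | treeNorm K L h ≤ 1}) hg)).trans
    (by simp)

lemma treeNorm_succ_neg_le (L : ℕ) (g : C(K, ℝ)) :
    treeNorm K (L + 1) (-g) ≤ treeNorm K (L + 1) g :=
  le_iInf fun ⟨_, hrep⟩ =>
    (barronNorm_le_of_isBarronRep (IsBarronRep.neg hrep)).trans_eq (add_comm _ _)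

lemma treeNorm_succ_inv_smul_le_one {L : ℕ} {f : C(K, ℝ)} {c : ℝ≥0}
    (hc : treeNorm K (L + 1) f < c) : treeNorm K (L + 1) ((c⁻¹ : ℝ≥0) • f) ≤ 1 := by
  obtain ⟨μp, μn, hrep, hmass⟩ := exists_isBarronRep_of_barronNorm_lt hc
  have hc0 : (c : ℝ≥0∞) ≠ 0 := ne_bot_of_gt hc
  calc treeNorm K (L + 1) ((c⁻¹ : ℝ≥0) • f)
      ≤ (c⁻¹ • μp) univ + (c⁻¹ • μn) univ := barronNorm_le_of_isBarronRep (hrep.smul c⁻¹)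
    _ = (c : ℝ≥0∞)⁻¹ * (μp univ + μn univ) := by
      simp [ENNReal.smul_def, mul_add, ENNReal.coe_inv (ENNReal.coe_ne_zero.1 hc0)]
    _ ≤ (c : ℝ≥0∞)⁻¹ * c := by gcongr
    _ = 1 := ENNReal.inv_mul_cancel hc0 ENNReal.coe_ne_top

lemma exists_treeNorm_add_le_one_relu_eq {L : ℕ} {g : C(K, ℝ)} (hg : treeNorm K L g ≤ 1)
    (m : ℕ) : ∃ g' : C(K, ℝ), treeNorm K (L + m) g' ≤ 1 ∧ ∀ x, relu (g' x) = relu (g x) := by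
  induction m with
  | zero => exact ⟨g, hg, fun _ => rfl⟩
  | succ m ih =>
    obtain ⟨g', hg', hrelu⟩ := ih
    exact ⟨reluComp g', treeNorm_succ_reluComp_le_one hg', fun x => by
      rw [reluComp_apply, relu_relu, hrelu]⟩

lemma treeNorm_le_two_mul_of_lt {L : ℕ} {f : C(K, ℝ)} {c : ℝ≥0}
    (hc : treeNorm K (L + 1) f < c) (m : ℕ) : treeNorm K (L + 1 + m + 1) f ≤ 2 * c := by
  set g : C(K, ℝ) := (c⁻¹ : ℝ≥0) • f
  have hg : treeNorm K (L + 1) g ≤ 1 := treeNorm_succ_inv_smul_le_one hc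
  obtain ⟨gp, hgp, hrelu_p⟩ := exists_treeNorm_add_le_one_relu_eq hg m
  obtain ⟨gn, hgn, hrelu_n⟩ :=
    exists_treeNorm_add_le_one_relu_eq ((treeNorm_succ_neg_le L g).trans hg) m
  have hrep : IsBarronRep K {h | treeNorm K (L + 1 + m) h ≤ 1} g
      (Measure.dirac gp) (Measure.dirac gn) :=
    isBarronRep_dirac_sub_dirac hgp hgn fun x => by
      rw [hrelu_p, hrelu_n, ContinuousMap.neg_apply, relu_sub_relu_neg]
  have hcg : (c : ℝ) • g = f := by
    rw [← NNReal.smul_def, smul_smul, mul_inv_cancel₀ (ENNReal.coe_ne_zero.1 (ne_bot_of_gt hc)),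
      one_smul]
  calc treeNorm K (L + 1 + m + 1) f
      ≤ (c • Measure.dirac gp) univ + (c • Measure.dirac gn) univ := by
        rw [← hcg]; exact barronNorm_le_of_isBarronRep (hrep.smul c)
    _ = 2 * c := by
      simp only [Measure.smul_apply, measure_univ, ENNReal.smul_def, smul_eq_mul, mul_one,
        two_mul]

end

theorem treeSpace_monotone_in_depth_general {d : ℕ} (K : Set (Fin d → ℝ))
    (ℓ L : ℕ) (hℓ : 1 ≤ ℓ) (hL : 1 ≤ L) (f : C(K, ℝ)) :
    treeNorm K (ℓ + L) f ≤ 2 * treeNorm K L f := by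
  obtain ⟨L, rfl⟩ := Nat.exists_eq_add_of_le' hL
  obtain ⟨ℓ, rfl⟩ := Nat.exists_eq_add_of_le' hℓ
  rw [show ℓ + 1 + (L + 1) = L + 1 + ℓ + 1 by omega]
  by_contra! hlt
  have hhalf : treeNorm K (L + 1) f < treeNorm K (L + 1 + ℓ + 1) f / 2 :=
    (ENNReal.lt_div_iff_mul_lt (by simp) (by simp)).2 (by rwa [mul_comm])
  obtain ⟨c, hfc, hc⟩ := ENNReal.lt_iff_exists_nnreal_btwn.1 hhalf
  exact (ENNReal.mul_lt_of_lt_div' hc).not_ge (treeNorm_le_two_mul_of_lt hfc ℓ)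

/-- For `ℓ, L ≥ 1` and compact `K ⊆ ℝ^d`, every `f ∈ W^L(K)` belongs to
`W^{ℓ+L}(K)` and `‖f‖_{W^{ℓ+L}(K)} ≤ 2‖f‖_{W^L(K)}`. -/
theorem treeSpace_monotone_in_depth {d : ℕ} (K : Set (Fin d → ℝ)) (hK : IsCompact K)
    (ℓ L : ℕ) (hℓ : 1 ≤ ℓ) (hL : 1 ≤ L) (f : C(K, ℝ)) (hf : treeNorm K L f ≠ ⊤) :
    treeNorm K (ℓ + L) f ≤ 2 * treeNorm K L f :=
  treeSpace_monotone_in_depth_general K ℓ L hℓ hL f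
end

section
/- For every L ≥ 0 and every set S of N points in [−1,1]^d, the hypothesis class H^L given by the closed unit ball of W^L([−1,1]^d) satisfies the Rademacher complexity bound Rad(H^L; S) ≤ 2^L √(2 log(2d+2) / N). -/
open MeasureTheory Set Filter Topology
open scoped ENNReal NNReal Classical

noncomputable section

/-- The Rademacher complexity `Rad(H; S) = E_ξ [ sup_{h ∈ H} (1/N) Σᵢ ξᵢ h(xᵢ) ]`
of a class `H` of real-valued functions on a sample `S = (x_1, …, x_N)`, where the `ξᵢ`
are i.i.d. uniform random signs (the expectation is the average over all `2^N` sign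
patterns); valued in `EReal` to handle unbounded classes. -/
def rademacher {α : Type*} {N : ℕ} (H : Set (α → ℝ)) (S : Fin N → α) : EReal :=
  (((2 ^ N : ℝ)⁻¹ : ℝ) : EReal) *
    ∑ ξ : Fin N → Bool,
      ⨆ h ∈ H, ((((N : ℝ))⁻¹ * ∑ i : Fin N, (if ξ i then (1 : ℝ) else -1) * h (S i) : ℝ) : EReal)

/-- The cube `[-1,1]^d ⊆ ℝ^d`. -/
def cube (d : ℕ) : Set (Fin d → ℝ) := {x | ∀ i, |x i| ≤ 1}

end


/-!
Let `T_L ⊆ [-1,1]^N` be the set of value vectors `(F x₁, …, F x_N)` of the unit ball of `W^L`.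
A function of `W⁰`-norm at most one is an `ℓ¹`-combination of mass at most one of the `2d + 2`
functions `±xⱼ, ±1`, so the Rademacher average of `T_0` is controlled by Massart's finite class
lemma. A function of `W^{L+1}`-norm at most one is a signed mixture of mass at most one of
`relu ∘ g` with `g` in the unit ball of `W^L`, so its correlation with a sign vector `ε` is at most
`sup_g |⟨ε, relu ∘ g⟩|`. Since the ball contains `0` and `ε ↦ -ε` preserves the sign distribution,
dropping the absolute value costs a factor `2`, and the Ledoux–Talagrand contraction principle
removes the `1`-Lipschitz `relu`. Each level therefore doubles the bound.
-/

noncomputable section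

open Finset Function Real

lemma abs_relu_le (z : ℝ) : |relu z| ≤ |z| := by
  unfold relu
  rw [abs_of_nonneg (le_max_right z 0)]
  exact max_le (le_abs_self z) (abs_nonneg z)

lemma lipschitzWith_relu : LipschitzWith 1 relu := LipschitzWith.id.max_const 0

def Bool.toSign (b : Bool) : ℝ := if b then 1 else -1

lemma Bool.abs_toSign (b : Bool) : |b.toSign| = 1 := by cases b <;> simp [Bool.toSign]

lemma Bool.toSign_not (b : Bool) : (!b).toSign = -b.toSign := by cases b <;> simp [Bool.toSign]

lemma le_of_forall_one_lt_le_mul_real {a b : ℝ} (h : ∀ r, 1 < r → a ≤ b * r) : a ≤ b := by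
  have hlim : Tendsto (fun r => b * r) (𝓝[>] 1) (𝓝 b) := by
    simpa only [mul_one] using ((continuous_const_mul b).tendsto 1).mono_left nhdsWithin_le_nhds
  exact ge_of_tendsto hlim (eventually_nhdsWithin_of_forall h)

namespace Rademacher

variable {N : ℕ} {ι : Type*}

def signedSum (ξ : Fin N → Bool) (t : Fin N → ℝ) : ℝ := ∑ i, (ξ i).toSign * t i

/-- `2 ^ N * N` times the empirical Rademacher complexity of the vectors `v j`. -/
def rademacherSum (v : ι → Fin N → ℝ) : ℝ := ∑ ξ : Fin N → Bool, ⨆ j, signedSum ξ (v j)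

lemma signedSum_not (ξ : Fin N → Bool) (t : Fin N → ℝ) :
    signedSum (fun i => !ξ i) t = -signedSum ξ t := by
  simp only [signedSum, Bool.toSign_not, neg_mul, sum_neg_distrib]

lemma signedSum_smul (ξ : Fin N → Bool) (l : ℝ) (t : Fin N → ℝ) :
    signedSum ξ (l • t) = l * signedSum ξ t := by
  simp only [signedSum, Pi.smul_apply, smul_eq_mul, mul_sum]
  exact sum_congr rfl fun i _ => by ring

lemma signedSum_update (ξ : Fin N → Bool) (t : Fin N → ℝ) (k : Fin N) (y : ℝ) :
    signedSum ξ (update t k y) = signedSum ξ (update t k 0) + (ξ k).toSign * y := by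
  simp only [signedSum, ← add_sum_erase _ _ (mem_univ k), update_self, mul_zero, zero_add]
  rw [add_comm]
  congr 1
  refine sum_congr rfl fun i hi => ?_
  rw [update_of_ne (ne_of_mem_erase hi), update_of_ne (ne_of_mem_erase hi)]

lemma signedSum_update_not (ξ : Fin N → Bool) (t : Fin N → ℝ) (k : Fin N) :
    signedSum (update ξ k (!ξ k)) (update t k 0) = signedSum ξ (update t k 0) := by
  refine sum_congr rfl fun i _ => ?_
  rcases eq_or_ne i k with rfl | hi
  · simp
  · rw [update_of_ne hi]

lemma abs_signedSum_le {C : ℝ} (ξ : Fin N → Bool) {t : Fin N → ℝ} (ht : ∀ i, |t i| ≤ C) :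
    |signedSum ξ t| ≤ N * C :=
  calc |signedSum ξ t| ≤ ∑ i, |(ξ i).toSign * t i| := abs_sum_le_sum_abs _ _
    _ ≤ ∑ _i : Fin N, C := sum_le_sum fun i _ => by
        rw [abs_mul, Bool.abs_toSign, one_mul]; exact ht i
    _ = N * C := by simp

lemma bddAbove_range_signedSum {C : ℝ} {v : ι → Fin N → ℝ} (hv : ∀ j i, |v j i| ≤ C)
    (ξ : Fin N → Bool) : BddAbove (Set.range fun j => signedSum ξ (v j)) :=
  ⟨N * C, Set.forall_mem_range.2 fun j => (le_abs_self _).trans (abs_signedSum_le ξ (hv j))⟩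

lemma rademacher_le_rademacherSum {α : Type*} (H : Set (α → ℝ)) (S : Fin N → α)
    {v : ι → Fin N → ℝ} {C : ℝ} (hv : ∀ j i, |v j i| ≤ C)
    (hH : ∀ h ∈ H, ∃ j, v j = fun i => h (S i)) :
    rademacher H S ≤ (((2 ^ N * N : ℝ)⁻¹ * rademacherSum v : ℝ) : EReal) := by
  have hcoe : ((∑ ξ : Fin N → Bool, (N : ℝ)⁻¹ * ⨆ j, signedSum ξ (v j) : ℝ) : EReal)
      = ∑ ξ : Fin N → Bool, (((N : ℝ)⁻¹ * ⨆ j, signedSum ξ (v j) : ℝ) : EReal) :=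
    map_sum ({ toFun := (↑), map_zero' := rfl, map_add' := EReal.coe_add } : ℝ →+ EReal) _ _
  rw [rademacherSum, mul_inv, mul_assoc, mul_sum, EReal.coe_mul, hcoe, rademacher]
  refine mul_le_mul_of_nonneg_left (sum_le_sum fun ξ _ => iSup₂_le fun h hh => ?_)
    (EReal.coe_nonneg.2 (by positivity))
  obtain ⟨j, hj⟩ := hH h hh
  refine EReal.coe_le_coe_iff.2 (mul_le_mul_of_nonneg_left ?_ (by positivity))
  calc ∑ i, (if ξ i then (1 : ℝ) else -1) * h (S i) = signedSum ξ (v j) := by rw [hj]; rfl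
    _ ≤ ⨆ j, signedSum ξ (v j) := le_ciSup (bddAbove_range_signedSum hv ξ) j

/-- The contraction principle for a single pair of sign vectors. -/
lemma ciSup_add_ciSup_le_of_lipschitzWith [Nonempty ι] {φ : ℝ → ℝ} (hφ : LipschitzWith 1 φ)
    (a b : ι → ℝ) (s : ℝ) (h₁ : BddAbove (Set.range fun j => a j + s * b j))
    (h₂ : BddAbove (Set.range fun j => a j - s * b j)) :
    (⨆ j, a j + s * φ (b j)) + (⨆ j, a j - s * φ (b j))
      ≤ (⨆ j, a j + s * b j) + (⨆ j, a j - s * b j) := by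
  have key : ∀ j j', (a j + s * φ (b j)) + (a j' - s * φ (b j'))
      ≤ (⨆ j, a j + s * b j) + (⨆ j, a j - s * b j) := by
    intro j j'
    have hφj : |φ (b j) - φ (b j')| ≤ |b j - b j'| := by
      simpa only [Real.dist_eq, NNReal.coe_one, one_mul] using hφ.dist_le_mul (b j) (b j')
    have hlip : s * (φ (b j) - φ (b j')) ≤ |s * (b j - b j')| := by
      refine (le_abs_self _).trans ?_
      rw [abs_mul, abs_mul]
      exact mul_le_mul_of_nonneg_left hφj (abs_nonneg s)
    have := le_ciSup h₁ j; have := le_ciSup h₁ j'; have := le_ciSup h₂ j; have := le_ciSup h₂ j'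
    cases abs_cases (s * (b j - b j')) <;> nlinarith
  rw [← le_sub_iff_add_le]
  refine ciSup_le fun j => ?_
  rw [le_sub_comm]
  exact ciSup_le fun j' => by linarith [key j j']

lemma rademacherSum_update_le [Nonempty ι] {φ : ℝ → ℝ} (hφ : LipschitzWith 1 φ)
    {v : ι → Fin N → ℝ} (hv : ∀ ξ, BddAbove (Set.range fun j => signedSum ξ (v j)))
    (k : Fin N) :
    rademacherSum (fun j => update (v j) k (φ (v j k))) ≤ rademacherSum v := by
  set flip : (Fin N → Bool) → (Fin N → Bool) := fun ξ => update ξ k (!ξ k)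
  have hflip : Involutive flip := fun ξ => by simp [flip]
  have pair : ∀ F : (Fin N → Bool) → ℝ, 2 * ∑ ξ, F ξ = ∑ ξ, (F ξ + F (flip ξ)) := fun F => by
    have := Equiv.sum_comp hflip.toPerm F
    rw [Involutive.coe_toPerm] at this
    rw [sum_add_distrib, this]; ring
  suffices h : ∀ ξ, (⨆ j, signedSum ξ (update (v j) k (φ (v j k))))
      + (⨆ j, signedSum (flip ξ) (update (v j) k (φ (v j k))))
      ≤ (⨆ j, signedSum ξ (v j)) + ⨆ j, signedSum (flip ξ) (v j) by
    have := Finset.sum_le_sum fun ξ (_ : ξ ∈ Finset.univ) => h ξ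
    simp only [rademacherSum]
    linarith [pair fun ξ => ⨆ j, signedSum ξ (update (v j) k (φ (v j k))),
      pair fun ξ => ⨆ j, signedSum ξ (v j)]
  intro ξ
  set a : ι → ℝ := fun j => signedSum ξ (update (v j) k 0)
  set s := (ξ k).toSign
  have hξ : ∀ j y, signedSum ξ (update (v j) k y) = a j + s * y := fun j y =>
    signedSum_update _ _ _ _
  have hflipξ : ∀ j y, signedSum (flip ξ) (update (v j) k y) = a j - s * y := fun j y => by
    rw [signedSum_update, signedSum_update_not]
    simp [flip, Bool.toSign_not, a, s, sub_eq_add_neg]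
  have hξ' : ∀ j, signedSum ξ (v j) = a j + s * v j k := fun j => by
    rw [← hξ, update_eq_self]
  have hflipξ' : ∀ j, signedSum (flip ξ) (v j) = a j - s * v j k := fun j => by
    rw [← hflipξ, update_eq_self]
  simp only [hξ, hflipξ, hξ', hflipξ']
  exact ciSup_add_ciSup_le_of_lipschitzWith hφ a (fun j => v j k) s
    (by simpa only [hξ'] using hv ξ) (by simpa only [hflipξ'] using hv (flip ξ))

/-- The Ledoux–Talagrand contraction principle. -/
theorem rademacherSum_comp_le [Nonempty ι] {φ : ℝ → ℝ} (hφ : LipschitzWith 1 φ)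
    {v : ι → Fin N → ℝ} {C : ℝ} (hv : ∀ j i, |v j i| ≤ C) :
    rademacherSum (fun j i => φ (v j i)) ≤ rademacherSum v := by
  have hφv : ∀ j i, |φ (v j i)| ≤ C + |φ 0| := fun j i => by
    have := hφ.dist_le_mul (v j i) 0
    simp only [Real.dist_eq, NNReal.coe_one, one_mul, sub_zero] at this
    linarith [abs_sub_abs_le_abs_sub (φ (v j i)) (φ 0), hv j i]
  -- apply `φ` one coordinate at a time
  suffices h : ∀ A : Finset (Fin N),
      rademacherSum (fun j => A.piecewise (fun i => φ (v j i)) (v j)) ≤ rademacherSum v by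
    simpa only [Finset.piecewise_univ] using h univ
  intro A
  induction A using Finset.induction_on with
  | empty => simp only [Finset.piecewise_empty, le_refl]
  | insert k A hk ih =>
    have hbdd : ∀ j i, |A.piecewise (fun i => φ (v j i)) (v j) i| ≤ C + |φ 0| := fun j i => by
      by_cases hi : i ∈ A
      · simpa [hi] using hφv j i
      · simpa [hi] using (hv j i).trans (le_add_of_nonneg_right (abs_nonneg _))
    refine le_trans ?_ (ih.trans' (rademacherSum_update_le hφ (bddAbove_range_signedSum hbdd) k))
    simp only [Finset.piecewise_insert, Finset.piecewise_eq_of_notMem _ _ _ hk, le_refl]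

lemma sum_ciSup_abs_signedSum_le [Nonempty ι] {v : ι → Fin N → ℝ} {C : ℝ}
    (hv : ∀ j i, |v j i| ≤ C) (h₀ : ∃ j, v j = 0) :
    ∑ ξ : Fin N → Bool, ⨆ j, |signedSum ξ (v j)| ≤ 2 * rademacherSum v := by
  obtain ⟨j₀, hj₀⟩ := h₀
  have hnonneg : ∀ ξ, 0 ≤ ⨆ j, signedSum ξ (v j) := fun ξ =>
    le_ciSup_of_le (bddAbove_range_signedSum hv ξ) j₀ (by simp [hj₀, signedSum])
  have pointwise : ∀ ξ, ⨆ j, |signedSum ξ (v j)|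
      ≤ (⨆ j, signedSum ξ (v j)) + ⨆ j, signedSum (fun i => !ξ i) (v j) := fun ξ =>
    ciSup_le fun j => by
      have h₁ := le_ciSup (bddAbove_range_signedSum hv ξ) j
      have h₂ := le_ciSup (bddAbove_range_signedSum hv (fun i => !ξ i)) j
      rw [signedSum_not] at h₂
      cases abs_cases (signedSum ξ (v j)) <;>
        linarith [hnonneg ξ, hnonneg (fun i => !ξ i)]
  have hnot : Involutive fun ξ : Fin N → Bool => fun i => !ξ i := fun ξ => by simp
  have := Equiv.sum_comp hnot.toPerm fun ξ => ⨆ j, signedSum ξ (v j)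
  rw [Involutive.coe_toPerm] at this
  calc ∑ ξ : Fin N → Bool, ⨆ j, |signedSum ξ (v j)|
      ≤ ∑ ξ : Fin N → Bool,
          ((⨆ j, signedSum ξ (v j)) + ⨆ j, signedSum (fun i => !ξ i) (v j)) :=
        Finset.sum_le_sum fun ξ _ => pointwise ξ
    _ = 2 * rademacherSum v := by rw [sum_add_distrib, this, rademacherSum]; ring

lemma sum_exp_signedSum_le (t : Fin N → ℝ) :
    ∑ ξ : Fin N → Bool, exp (signedSum ξ t) ≤ 2 ^ N * exp (∑ i, t i ^ 2 / 2) :=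
  calc ∑ ξ : Fin N → Bool, exp (signedSum ξ t) = ∏ i, ∑ b : Bool, exp (b.toSign * t i) := by
        rw [Fintype.prod_sum]; simp only [signedSum, exp_sum]
    _ = ∏ i, 2 * cosh (t i) := by
        refine prod_congr rfl fun i _ => ?_
        rw [Fintype.sum_bool, cosh_eq]
        simp only [Bool.toSign, if_true, Bool.false_eq_true, if_false, one_mul, neg_one_mul]
        ring
    _ ≤ ∏ i, 2 * exp (t i ^ 2 / 2) := prod_le_prod (fun i _ => by positivity)
        fun i _ => mul_le_mul_of_nonneg_left (cosh_le_exp_half_sq _) zero_le_two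
    _ = 2 ^ N * exp (∑ i, t i ^ 2 / 2) := by
        rw [prod_mul_distrib, prod_const, card_univ, Fintype.card_fin, exp_sum]

section
variable {κ : Type*} [Fintype κ] [Nonempty κ]

lemma ciSup_le_log_sum_exp (f : κ → ℝ) : ⨆ k, f k ≤ log (∑ k, exp (f k)) := by
  obtain ⟨k, hk⟩ := exists_eq_ciSup_of_finite (f := f)
  rw [← hk, le_log_iff_exp_le (sum_pos (fun _ _ => exp_pos _) univ_nonempty)]
  exact single_le_sum (fun k _ => (exp_pos _).le) (mem_univ k)

lemma sum_log_le_card_mul_log_average {f : κ → ℝ} (hf : ∀ k, 0 < f k) :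
    ∑ k, log (f k) ≤ Fintype.card κ * log ((∑ k, f k) / Fintype.card κ) := by
  have hcard : (0 : ℝ) < Fintype.card κ := by exact_mod_cast Fintype.card_pos
  have := strictConcaveOn_log_Ioi.concaveOn.le_map_sum (t := univ)
    (w := fun _ => (Fintype.card κ : ℝ)⁻¹) (p := f) (fun _ _ => by positivity)
    (by simp [card_univ, hcard.ne']) fun k _ => hf k
  simp only [smul_eq_mul, ← mul_sum] at this
  rw [div_eq_inv_mul, ← inv_mul_le_iff₀ hcard]
  exact this

/-- Massart's finite class lemma, with a free exponential-moment parameter `l`. -/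
theorem rademacherSum_le_log_card_div_add {a : κ → Fin N → ℝ} (ha : ∀ k i, |a k i| ≤ 1)
    {l : ℝ} (hl : 0 < l) :
    rademacherSum a ≤ 2 ^ N * (log (Fintype.card κ) / l + N * l / 2) := by
  set Y : (Fin N → Bool) → ℝ := fun ξ => ∑ k, exp (signedSum ξ (l • a k))
  have hY : ∀ ξ, 0 < Y ξ := fun ξ => sum_pos (fun _ _ => exp_pos _) univ_nonempty
  have hsup : ∀ ξ, ⨆ k, signedSum ξ (a k) ≤ log (Y ξ) / l := fun ξ => by
    rw [le_div_iff₀ hl, mul_comm, Real.mul_iSup_of_nonneg hl.le]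
    simpa only [Y, signedSum_smul] using ciSup_le_log_sum_exp fun k => l * signedSum ξ (a k)
  have hsq : ∀ k, ∑ i, (l • a k) i ^ 2 / 2 ≤ N * l ^ 2 / 2 := fun k => by
    calc ∑ i, (l • a k) i ^ 2 / 2 ≤ ∑ _i : Fin N, l ^ 2 / 2 := sum_le_sum fun i _ => by
          rw [Pi.smul_apply, smul_eq_mul, mul_pow]
          have := (sq_le_one_iff_abs_le_one (a k i)).2 (ha k i)
          have := sq_nonneg l
          nlinarith
      _ = N * l ^ 2 / 2 := by
          simp only [sum_const, card_univ, Fintype.card_fin, nsmul_eq_mul]; ring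
  have hsumY : ∑ ξ, Y ξ ≤ 2 ^ N * (Fintype.card κ * exp (N * l ^ 2 / 2)) := by
    simp only [Y]
    rw [sum_comm]
    calc ∑ k, ∑ ξ : Fin N → Bool, exp (signedSum ξ (l • a k))
        ≤ ∑ _k : κ, 2 ^ N * exp (N * l ^ 2 / 2) := sum_le_sum fun k _ =>
          (sum_exp_signedSum_le _).trans (by gcongr; exact hsq k)
      _ = 2 ^ N * (Fintype.card κ * exp (N * l ^ 2 / 2)) := by
          simp only [sum_const, card_univ, nsmul_eq_mul]; ring
  have hcard : (Fintype.card (Fin N → Bool) : ℝ) = 2 ^ N := by simp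
  calc rademacherSum a ≤ ∑ ξ, log (Y ξ) / l := sum_le_sum fun ξ _ => hsup ξ
    _ = (∑ ξ, log (Y ξ)) / l := (sum_div _ _ _).symm
    _ ≤ (2 ^ N * log ((∑ ξ, Y ξ) / 2 ^ N)) / l := by
        gcongr; simpa only [hcard] using sum_log_le_card_mul_log_average hY
    _ ≤ (2 ^ N * log (Fintype.card κ * exp (N * l ^ 2 / 2))) / l := by
        gcongr
        rwa [div_le_iff₀' (by positivity)]
    _ = 2 ^ N * (log (Fintype.card κ) / l + N * l / 2) := by
        rw [log_mul (by simp) (exp_pos _).ne', log_exp]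
        field_simp

/-- Massart's finite class lemma. -/
theorem rademacherSum_le_sqrt_log_card {a : κ → Fin N → ℝ} (ha : ∀ k i, |a k i| ≤ 1)
    (hN : 0 < N) (hκ : 1 < Fintype.card κ) :
    rademacherSum a ≤ 2 ^ N * √(2 * N * log (Fintype.card κ)) := by
  set r := √(2 * N * log (Fintype.card κ))
  have hN' : (0 : ℝ) < N := by exact_mod_cast hN
  have hlog : 0 < log (Fintype.card κ) := log_pos (by exact_mod_cast hκ)
  have hr : 0 < r := sqrt_pos.2 (by positivity)
  have hr2 : r ^ 2 = 2 * N * log (Fintype.card κ) := sq_sqrt (by positivity)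
  -- the optimal parameter `l = √(2 log |κ| / N)`
  convert rademacherSum_le_log_card_div_add ha (div_pos hr hN') using 2
  field_simp
  nlinarith

end

def symmetrize {κ : Type*} (u : κ → Fin N → ℝ) : κ × Bool → Fin N → ℝ :=
  fun p => p.2.toSign • u p.1

lemma signedSum_symmetrize {κ : Type*} (u : κ → Fin N → ℝ) (ξ : Fin N → Bool) (p : κ × Bool) :
    signedSum ξ (symmetrize u p) = p.2.toSign * signedSum ξ (u p.1) :=
  signedSum_smul _ _ _

lemma abs_signedSum_le_ciSup_symmetrize {κ : Type*} [Finite κ] (u : κ → Fin N → ℝ)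
    (ξ : Fin N → Bool) (k : κ) : |signedSum ξ (u k)| ≤ ⨆ p, signedSum ξ (symmetrize u p) := by
  have hbdd := Finite.bddAbove_range fun p => signedSum ξ (symmetrize u p)
  have h₁ := le_ciSup hbdd (k, true)
  have h₂ := le_ciSup hbdd (k, false)
  rw [signedSum_symmetrize] at h₁ h₂
  simp only [Bool.toSign, if_true, Bool.false_eq_true, if_false] at h₁ h₂
  exact abs_le.2 ⟨by linarith, by linarith⟩

end Rademacher

open Rademacher

section
variable {d : ℕ} {K : Set (Fin d → ℝ)}

instance inst_s14 : BorelSpace C(K, ℝ) := ⟨rfl⟩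

lemma treeNorm_zero (L : ℕ) : treeNorm K L 0 = 0 := by
  refine le_antisymm ?_ bot_le
  cases L with
  | zero => exact (iInf_le _ ⟨(0, 0), fun x => by simp⟩).trans (by simp)
  | succ L =>
    refine (iInf_le _ ⟨(0, 0), ?_⟩).trans (by simp)
    exact ⟨inferInstance, inferInstance, rfl, rfl, fun x => by simp⟩

lemma exists_affine_of_treeNorm_zero_le_one {f : C(K, ℝ)} (hf : treeNorm K 0 f ≤ 1) {r : ℝ}
    (hr : 1 < r) : ∃ (w : Fin d → ℝ) (b : ℝ),
      (∀ x : K, f x = ∑ i, w i * (x : Fin d → ℝ) i + b) ∧ ∑ i, |w i| + |b| < r := by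
  have hlt : treeNorm K 0 f < ENNReal.ofReal r := hf.trans_lt (ENNReal.one_lt_ofReal.2 hr)
  rw [treeNorm] at hlt
  obtain ⟨⟨⟨w, b⟩, hwb⟩, hmass⟩ := iInf_lt_iff.1 hlt
  exact ⟨w, b, hwb, (ENNReal.ofReal_lt_ofReal_iff (by linarith)).1 hmass⟩

lemma exists_isBarronRep_of_barronNorm_le_one {H : Set C(K, ℝ)} {f : C(K, ℝ)}
    (hf : barronNorm K H f ≤ 1) {r : ℝ} (hr : 1 < r) :
    ∃ μp μn, IsBarronRep K H f μp μn ∧ μp.real Set.univ + μn.real Set.univ < r := by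
  have hlt : barronNorm K H f < ENNReal.ofReal r := hf.trans_lt (ENNReal.one_lt_ofReal.2 hr)
  obtain ⟨⟨⟨μp, μn⟩, hrep⟩, hmass⟩ := iInf_lt_iff.1 hlt
  have := hrep.1; have := hrep.2.1
  refine ⟨μp, μn, hrep, ?_⟩
  rw [measureReal_def, measureReal_def, ← ENNReal.toReal_add (by finiteness) (by finiteness)]
  exact ENNReal.toReal_lt_of_lt_ofReal hmass

lemma abs_sum_mul_le_of_treeNorm_zero_le_one {ι : Type*} [Fintype ι] {f : C(K, ℝ)}
    (hf : treeNorm K 0 f ≤ 1) (c : ι → ℝ) (x : ι → K) {B : ℝ}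
    (hB : ∀ j, |∑ i, c i * (x i : Fin d → ℝ) j| ≤ B) (hB₁ : |∑ i, c i| ≤ B) :
    |∑ i, c i * f (x i)| ≤ B := by
  refine le_of_forall_one_lt_le_mul_real fun r hr => ?_
  obtain ⟨w, b, hwb, hmass⟩ := exists_affine_of_treeNorm_zero_le_one hf hr
  have hexpand : ∑ i, c i * f (x i)
      = ∑ j, w j * ∑ i, c i * (x i : Fin d → ℝ) j + b * ∑ i, c i := by
    simp only [hwb, mul_add, sum_add_distrib, mul_sum]
    rw [sum_comm]
    congr 1 <;> refine sum_congr rfl fun _ _ => ?_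
    · exact sum_congr rfl fun _ _ => by ring
    · ring
  have hB₀ : 0 ≤ B := (abs_nonneg _).trans hB₁
  calc |∑ i, c i * f (x i)|
      ≤ ∑ j, |w j| * |∑ i, c i * (x i : Fin d → ℝ) j| + |b| * |∑ i, c i| := by
        rw [hexpand]
        refine (abs_add_le _ _).trans (add_le_add ((abs_sum_le_sum_abs _ _).trans ?_) ?_)
        · simp only [abs_mul, le_refl]
        · rw [abs_mul]
    _ ≤ (∑ j, |w j| + |b|) * B := by
        rw [add_mul, sum_mul]
        gcongr with j
        exact hB j
    _ ≤ B * r := by rw [mul_comm]; gcongr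

lemma integrable_relu_eval {H : Set C(K, ℝ)} {M : ℝ} (hH : ∀ g ∈ H, ∀ y, |g y| ≤ M)
    {μ : Measure C(K, ℝ)} [IsFiniteMeasure μ] (hμ : μ Hᶜ = 0) (x : K) :
    Integrable (fun g : C(K, ℝ) => relu (g x)) μ :=
  Integrable.of_bound
    (lipschitzWith_relu.continuous.comp (continuous_eval_const x)).aestronglyMeasurable M
    ((show ∀ᵐ g ∂μ, g ∈ H from mem_ae_iff.2 hμ).mono fun g hg => (abs_relu_le _).trans (hH g hg x))

lemma abs_sum_mul_le_of_isBarronRep {H : Set C(K, ℝ)} {M : ℝ} (hH : ∀ g ∈ H, ∀ y, |g y| ≤ M)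
    {f : C(K, ℝ)} {μp μn : Measure C(K, ℝ)} (hrep : IsBarronRep K H f μp μn)
    {ι : Type*} [Fintype ι] (c : ι → ℝ) (x : ι → K) {B : ℝ}
    (hB : ∀ g ∈ H, |∑ i, c i * relu (g (x i))| ≤ B) :
    |∑ i, c i * f (x i)| ≤ B * (μp.real Set.univ + μn.real Set.univ) := by
  obtain ⟨hp, hn, hp₀, hn₀, hf⟩ := hrep
  have hint : ∀ μ : Measure C(K, ℝ), IsFiniteMeasure μ → μ Hᶜ = 0 →
      ∑ i, c i * ∫ g, relu (g (x i)) ∂μ = ∫ g, ∑ i, c i * relu (g (x i)) ∂μ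
        ∧ |∫ g, ∑ i, c i * relu (g (x i)) ∂μ| ≤ B * μ.real Set.univ := fun μ _ hμ => by
    refine ⟨?_, norm_integral_le_of_norm_le_const
      ((show ∀ᵐ g ∂μ, g ∈ H from mem_ae_iff.2 hμ).mono fun g hg => hB g hg :
        ∀ᵐ g ∂μ, ‖∑ i, c i * relu (g (x i))‖ ≤ B)⟩
    rw [integral_finsetSum _ fun i _ => (integrable_relu_eval hH hμ (x i)).const_mul (c i)]
    exact sum_congr rfl fun i _ => (integral_const_mul _ _).symm
  obtain ⟨hp_eq, hp_le⟩ := hint μp hp hp₀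
  obtain ⟨hn_eq, hn_le⟩ := hint μn hn hn₀
  calc |∑ i, c i * f (x i)|
      = |∫ g, ∑ i, c i * relu (g (x i)) ∂μp - ∫ g, ∑ i, c i * relu (g (x i)) ∂μn| := by
        simp only [hf, mul_sub, sum_sub_distrib, hp_eq, hn_eq]
    _ ≤ B * (μp.real Set.univ + μn.real Set.univ) := by
        rw [mul_add]; exact (abs_sub _ _).trans (add_le_add hp_le hn_le)

lemma abs_sum_mul_le_of_barronNorm_le_one {H : Set C(K, ℝ)} {M : ℝ}
    (hH : ∀ g ∈ H, ∀ y, |g y| ≤ M) {f : C(K, ℝ)} (hf : barronNorm K H f ≤ 1)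
    {ι : Type*} [Fintype ι] (c : ι → ℝ) (x : ι → K) {B : ℝ} (hB₀ : 0 ≤ B)
    (hB : ∀ g ∈ H, |∑ i, c i * relu (g (x i))| ≤ B) :
    |∑ i, c i * f (x i)| ≤ B := by
  refine le_of_forall_one_lt_le_mul_real fun r hr => ?_
  obtain ⟨μp, μn, hrep, hmass⟩ := exists_isBarronRep_of_barronNorm_le_one hf hr
  exact (abs_sum_mul_le_of_isBarronRep hH hrep c x hB).trans (by gcongr)

theorem abs_le_one_of_treeNorm_le_one (hK : K ⊆ cube d) :
    ∀ {L : ℕ} {f : C(K, ℝ)}, treeNorm K L f ≤ 1 → ∀ x, |f x| ≤ 1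
  | 0, f, hf, x => by
    simpa using abs_sum_mul_le_of_treeNorm_zero_le_one hf (fun _ : Unit => 1) (fun _ => x)
      (fun j => by simpa using hK x.2 j) (by simp)
  | L + 1, f, hf, x => by
    simpa using abs_sum_mul_le_of_barronNorm_le_one
      (fun g hg => abs_le_one_of_treeNorm_le_one hK hg) hf (fun _ : Unit => 1) (fun _ => x)
      zero_le_one fun g hg => by
        simpa using (abs_relu_le _).trans (abs_le_one_of_treeNorm_le_one hK hg x)

variable {N : ℕ}

instance (L : ℕ) : Nonempty {F : C(K, ℝ) // treeNorm K L F ≤ 1} :=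
  ⟨⟨0, by simp [treeNorm_zero]⟩⟩

def treeBallValues (K : Set (Fin d → ℝ)) (L : ℕ) (x : Fin N → K) :
    {F : C(K, ℝ) // treeNorm K L F ≤ 1} → Fin N → ℝ :=
  fun F i => F.1 (x i)

def affineFeatures (x : Fin N → K) : Option (Fin d) → Fin N → ℝ :=
  fun o i => o.elim 1 fun j => (x i : Fin d → ℝ) j

lemma abs_treeBallValues_le (hK : K ⊆ cube d) (L : ℕ) (x : Fin N → K) :
    ∀ F i, |treeBallValues K L x F i| ≤ 1 :=
  fun F i => abs_le_one_of_treeNorm_le_one hK F.2 (x i)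

lemma rademacherSum_treeBallValues_zero_le (x : Fin N → K) :
    rademacherSum (treeBallValues K 0 x) ≤ rademacherSum (symmetrize (affineFeatures x)) :=
  sum_le_sum fun ξ _ => ciSup_le fun F => (le_abs_self _).trans <|
    abs_sum_mul_le_of_treeNorm_zero_le_one F.2 (fun i => (ξ i).toSign) x
      (fun j => abs_signedSum_le_ciSup_symmetrize (affineFeatures x) ξ (some j))
      (by simpa [signedSum, affineFeatures] using
        abs_signedSum_le_ciSup_symmetrize (affineFeatures x) ξ none)

lemma rademacherSum_treeBallValues_succ_le (hK : K ⊆ cube d) (L : ℕ) (x : Fin N → K) :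
    rademacherSum (treeBallValues K (L + 1) x) ≤ 2 * rademacherSum (treeBallValues K L x) := by
  set v := treeBallValues K L x
  have hv := abs_treeBallValues_le hK L x
  have hrelu : ∀ F i, |relu (v F i)| ≤ 1 := fun F i => (abs_relu_le _).trans (hv F i)
  have hbdd : ∀ ξ, BddAbove (Set.range fun F => |signedSum ξ fun i => relu (v F i)|) :=
    fun ξ => ⟨N * 1, Set.forall_mem_range.2 fun F => abs_signedSum_le ξ (hrelu F)⟩
  calc rademacherSum (treeBallValues K (L + 1) x)
      ≤ ∑ ξ : Fin N → Bool, ⨆ F, |signedSum ξ fun i => relu (v F i)| :=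
        sum_le_sum fun ξ _ => ciSup_le fun F => (le_abs_self _).trans <|
          abs_sum_mul_le_of_barronNorm_le_one (fun g hg => abs_le_one_of_treeNorm_le_one hK hg)
            F.2 (fun i => (ξ i).toSign) x (Real.iSup_nonneg fun _ => abs_nonneg _)
            fun g hg => le_ciSup (hbdd ξ) ⟨g, hg⟩
    _ ≤ 2 * rademacherSum fun F i => relu (v F i) :=
        sum_ciSup_abs_signedSum_le hrelu ⟨⟨0, by simp [treeNorm_zero]⟩, by
          funext i; simp [v, treeBallValues, relu]⟩
    _ ≤ 2 * rademacherSum v := by gcongr; exact rademacherSum_comp_le lipschitzWith_relu hv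

theorem rademacherSum_treeBallValues_le (hK : K ⊆ cube d) (hN : 0 < N) (x : Fin N → K)
    (L : ℕ) :
    rademacherSum (treeBallValues K L x) ≤ 2 ^ L * (2 ^ N * √(2 * N * log (2 * d + 2))) := by
  induction L with
  | zero =>
    have hcard : (Fintype.card (Option (Fin d) × Bool) : ℝ) = 2 * d + 2 := by
      simp only [Fintype.card_prod, Fintype.card_option, Fintype.card_fin, Fintype.card_bool]
      push_cast; ring
    have hsymm : ∀ p i, |symmetrize (affineFeatures x) p i| ≤ 1 := by
      rintro ⟨o, b⟩ i
      rw [symmetrize, Pi.smul_apply, smul_eq_mul, abs_mul, Bool.abs_toSign, one_mul]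
      cases o with
      | none => simp [affineFeatures]
      | some j => exact hK (x i).2 j
    rw [pow_zero, one_mul, ← hcard]
    refine (rademacherSum_treeBallValues_zero_le x).trans
      (rademacherSum_le_sqrt_log_card hsymm hN ?_)
    simp only [Fintype.card_prod, Fintype.card_option, Fintype.card_fin, Fintype.card_bool]
    omega
  | succ L ih =>
    rw [pow_succ]
    linarith [rademacherSum_treeBallValues_succ_le hK L x]

theorem rademacher_treeBall_le (hK : K ⊆ cube d) (hN : 0 < N) (x : Fin N → K) (L : ℕ) :
    rademacher {h : K → ℝ | ∃ F : C(K, ℝ), treeNorm K L F ≤ 1 ∧ h = ⇑F} x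
      ≤ ((2 ^ L * √(2 * log (2 * d + 2) / N) : ℝ) : EReal) := by
  refine (rademacher_le_rademacherSum _ x (abs_treeBallValues_le hK L x) ?_).trans ?_
  · rintro _ ⟨F, hF, rfl⟩
    exact ⟨⟨F, hF⟩, rfl⟩
  have hN' : (0 : ℝ) < N := by exact_mod_cast hN
  have hsqrt : √(2 * N * log (2 * d + 2)) = N * √(2 * log (2 * d + 2) / N) := by
    rw [show 2 * N * log (2 * d + 2) = N ^ 2 * (2 * log (2 * d + 2) / N) by field_simp,
      sqrt_mul (sq_nonneg _), sqrt_sq hN'.le]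
  have hbound := rademacherSum_treeBallValues_le hK hN x L
  rw [hsqrt] at hbound
  rw [EReal.coe_le_coe_iff]
  calc (2 ^ N * N : ℝ)⁻¹ * rademacherSum (treeBallValues K L x)
      ≤ (2 ^ N * N : ℝ)⁻¹ * (2 ^ L * (2 ^ N * (N * √(2 * log (2 * d + 2) / N)))) := by gcongr
    _ = 2 ^ L * √(2 * log (2 * d + 2) / N) := by field_simp

end

end

/-- For every `L ≥ 0` and every sample `S` of `N ≥ 1` points in
`[−1,1]^d`, the class `H^L` given by the closed unit ball of `W^L([−1,1]^d)` satisfies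
`Rad(H^L; S) ≤ 2^L √(2 log(2d+2)/N)`. -/
theorem rademacher_treeSpace_bound {d : ℕ} (L N : ℕ) (hN : 0 < N)
    (S : Fin N → cube d) :
    rademacher {h : cube d → ℝ | ∃ F : C(cube d, ℝ), treeNorm (cube d) L F ≤ 1 ∧ h = ⇑F} S
      ≤ (((2 : ℝ) ^ L * Real.sqrt (2 * Real.log (2 * d + 2) / N) : ℝ) : EReal) :=
  rademacher_treeBall_le subset_rfl hN S L
end
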